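/- arXiv:2302.00324 — 4 statements merged into one kernel-verified Lean document; each statement's English description precedes it below -/
import Mathlib

section
/- Let k be a field and L = k[x]/(f) where f = x³ + a₂x² + a₁x + a₀ is a separable irreducible polynomial over k. Then the extension L/k is Galois if and only if there exists an automorphism σ ∈ Aut(L/k) of order 3 of the form σ(x) = (αx+β)/(γx+δ) with α,β,γ,δ ∈ k and αδ−βγ ≠ 0. -/
/-!
As `[L : k] = 3` is prime and `|Aut(L/k)| ≤ [L : k]`, the extension is Galois iff `Aut(L/k)` has
order 3, iff (Cauchy) it has an element of order 3. The Möbius form comes for free, for every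
automorphism: write `σ x = v₀ + v₁ x + v₂ x²` in the power basis `1, x, x²`. Multiplying by
`v₂ x - v₂ b₂ - v₁`, where `x³ = b₀ + b₁ x + b₂ x²`, cancels the `x²` term, so the product is
linear in `x`. A vanishing determinant would make `σ x` a constant, hence `x` a constant.
-/

open Polynomial

namespace PowerBasis

theorem exists_eq_of_dim_eq_three {R S : Type*} [CommRing R] [CommRing S] [Nontrivial S]
    [Algebra R S] (pb : PowerBasis R S) (h : pb.dim = 3) (y : S) :
    ∃ c₀ c₁ c₂ : R, y = algebraMap R S c₀ + algebraMap R S c₁ * pb.gen +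
      algebraMap R S c₂ * pb.gen ^ 2 := by
  obtain ⟨p, hp, rfl⟩ := pb.exists_eq_aeval y
  refine ⟨p.coeff 0, p.coeff 1, p.coeff 2, ?_⟩
  rw [aeval_eq_sum_range' (hp.trans_eq h)]
  simp [Finset.sum_range_succ, Algebra.smul_def]

theorem gen_notMem_range {R S : Type*} [Field R] [CommRing S] [Nontrivial S] [Algebra R S]
    (pb : PowerBasis R S) (h : 1 < pb.dim) : pb.gen ∉ (algebraMap R S).range := by
  rw [← minpoly.natDegree_eq_one_iff, pb.natDegree_minpoly]
  exact h.ne'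

end PowerBasis

section

variable {k L : Type*} [Field k] [Field L] [Algebra k L]

theorem isGalois_of_orderOf_eq_finrank [FiniteDimensional k L] (σ : L ≃ₐ[k] L)
    (hσ : orderOf σ = Module.finrank k L) : IsGalois k L := by
  refine IsGalois.of_card_aut_eq_finrank k L (le_antisymm ?_ ?_)
  · exact Nat.card_eq_fintype_card (α := L ≃ₐ[k] L) ▸ AlgEquiv.card_le
  · exact hσ ▸ Nat.le_of_dvd Nat.card_pos (orderOf_dvd_natCard σ)

theorem isGalois_iff_exists_orderOf_eq_finrank [FiniteDimensional k L]
    (hp : (Module.finrank k L).Prime) :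
    IsGalois k L ↔ ∃ σ : L ≃ₐ[k] L, orderOf σ = Module.finrank k L := by
  refine ⟨fun _ ↦ ?_, fun ⟨σ, hσ⟩ ↦ isGalois_of_orderOf_eq_finrank σ hσ⟩
  have := Fact.mk hp
  exact exists_prime_orderOf_dvd_card' _ (IsGalois.card_aut_eq_finrank k L).symm.dvd

def mobius (α β γ δ : k) (x : L) : L :=
  (algebraMap k L α * x + algebraMap k L β) / (algebraMap k L γ * x + algebraMap k L δ)

theorem mobius_mem_range_of_mul_eq_mul {α β γ δ : k} {x : L}
    (hden : algebraMap k L γ * x + algebraMap k L δ ≠ 0) (h : α * δ = β * γ) :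
    mobius α β γ δ x ∈ (algebraMap k L).range := by
  unfold mobius
  rcases eq_or_ne γ 0 with rfl | hγ
  · have hδ : δ ≠ 0 := by rintro rfl; simp at hden
    obtain rfl : α = 0 := by simpa [hδ] using h
    exact ⟨β / δ, by simp⟩
  · obtain rfl : β = α * δ / γ := by field_simp; exact h.symm
    refine ⟨α / γ, ?_⟩
    rw [eq_div_iff hden]
    have : algebraMap k L γ ≠ 0 := (_root_.map_ne_zero _).2 hγ
    simp only [map_div₀, map_mul]
    field_simp

theorem exists_mobius_eq_of_pow_three_eq {x y : L} (hx : x ∉ (algebraMap k L).range)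
    (hy : y ∉ (algebraMap k L).range) {b₀ b₁ b₂ v₀ v₁ v₂ : k}
    (hcube : x ^ 3 = algebraMap k L b₀ + algebraMap k L b₁ * x + algebraMap k L b₂ * x ^ 2)
    (hyx : y = algebraMap k L v₀ + algebraMap k L v₁ * x + algebraMap k L v₂ * x ^ 2) :
    ∃ α β γ δ : k, α * δ - β * γ ≠ 0 ∧ y = mobius α β γ δ x := by
  set δ := -(v₂ * b₂) - v₁ with hδ
  have hden : algebraMap k L v₂ * x + algebraMap k L δ ≠ 0 := by
    intro h0
    rcases eq_or_ne v₂ 0 with rfl | hv₂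
    · obtain rfl : v₁ = 0 := by simpa [hδ] using h0
      exact hy ⟨v₀, by simp [hyx]⟩
    · refine hx ⟨-δ / v₂, ?_⟩
      rw [map_div₀, map_neg, div_eq_iff ((_root_.map_ne_zero _).2 hv₂)]
      linear_combination -h0
  have hmul : y * (algebraMap k L v₂ * x + algebraMap k L δ) =
      algebraMap k L (v₂ ^ 2 * b₁ + v₀ * v₂ + v₁ * δ) * x +
        algebraMap k L (v₂ ^ 2 * b₀ + v₀ * δ) := by
    rw [hyx, hδ]
    simp only [map_add, map_mul, map_pow, map_neg, map_sub]
    linear_combination algebraMap k L v₂ ^ 2 * hcube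
  have hmob : y = mobius _ _ v₂ δ x := (eq_div_iff hden).2 hmul
  refine ⟨_, _, v₂, δ, fun hdet ↦ hy ?_, hmob⟩
  exact hmob ▸ mobius_mem_range_of_mul_eq_mul hden (sub_eq_zero.1 hdet)

namespace PowerBasis

theorem exists_mobius_eq_apply_gen (pb : PowerBasis k L) (h : pb.dim = 3) (σ : L ≃ₐ[k] L) :
    ∃ α β γ δ : k, α * δ - β * γ ≠ 0 ∧ σ pb.gen = mobius α β γ δ pb.gen := by
  have hgen := pb.gen_notMem_range (by omega)
  have hσgen : σ pb.gen ∉ (algebraMap k L).range := by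
    rintro ⟨c, hc⟩
    exact hgen ⟨c, by rw [← σ.symm.commutes, hc, σ.symm_apply_apply]⟩
  obtain ⟨b₀, b₁, b₂, hcube⟩ := pb.exists_eq_of_dim_eq_three h (pb.gen ^ 3)
  obtain ⟨v₀, v₁, v₂, hσ⟩ := pb.exists_eq_of_dim_eq_three h (σ pb.gen)
  exact exists_mobius_eq_of_pow_three_eq hgen hσgen hcube hσ

end PowerBasis

end

theorem stmt_4_general {k : Type*} [Field k] (a₀ a₁ a₂ : k) (f : k[X])
    (hf : f = X ^ 3 + C a₂ * X ^ 2 + C a₁ * X + C a₀)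
    (hirr : Fact (Irreducible f)) :
    IsGalois k (AdjoinRoot f) ↔
      ∃ σ : AdjoinRoot f ≃ₐ[k] AdjoinRoot f, orderOf σ = 3 ∧
        ∃ α β γ δ : k, α * δ - β * γ ≠ 0 ∧
          σ (AdjoinRoot.root f) =
            (algebraMap k (AdjoinRoot f) α * AdjoinRoot.root f + algebraMap k (AdjoinRoot f) β)
              / (algebraMap k (AdjoinRoot f) γ * AdjoinRoot.root f
                  + algebraMap k (AdjoinRoot f) δ) := by
  let pb := AdjoinRoot.powerBasis hirr.out.ne_zero
  have hdim : pb.dim = 3 := by rw [AdjoinRoot.powerBasis_dim, hf]; compute_degree!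
  have := pb.finite
  rw [isGalois_iff_exists_orderOf_eq_finrank (by rw [pb.finrank, hdim]; norm_num), pb.finrank,
    hdim]
  constructor
  · rintro ⟨σ, hσ⟩
    exact ⟨σ, hσ, pb.exists_mobius_eq_apply_gen hdim σ⟩
  · rintro ⟨σ, hσ, -⟩
    exact ⟨σ, hσ⟩

/-- Let `k` be a field and `L = k[x]/(f)` where
`f = x³ + a₂x² + a₁x + a₀` is a separable irreducible polynomial over `k`.  Then `L/k` is
Galois if and only if there exists an automorphism `σ ∈ Aut(L/k)` of order `3` of the form
`σ(x) = (αx+β)/(γx+δ)` with `α,β,γ,δ ∈ k` and `αδ − βγ ≠ 0`. -/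
theorem stmt_4 {k : Type*} [Field k] (a₀ a₁ a₂ : k) (f : k[X])
    (hf : f = X ^ 3 + C a₂ * X ^ 2 + C a₁ * X + C a₀)
    (hsep : f.Separable) (hirr : Fact (Irreducible f)) :
    IsGalois k (AdjoinRoot f) ↔
      ∃ σ : AdjoinRoot f ≃ₐ[k] AdjoinRoot f, orderOf σ = 3 ∧
        ∃ α β γ δ : k, α * δ - β * γ ≠ 0 ∧
          σ (AdjoinRoot.root f) =
            (algebraMap k (AdjoinRoot f) α * AdjoinRoot.root f + algebraMap k (AdjoinRoot f) β)
              / (algebraMap k (AdjoinRoot f) γ * AdjoinRoot.root f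
                  + algebraMap k (AdjoinRoot f) δ) :=
  stmt_4_general a₀ a₁ a₂ f hf hirr
end

section
/- Let k be a field, L = k[x]/(x³+a₂x²+a₁x+a₀) a Galois cubic extension of k with f separable and irreducible, and let σ be a generator of the Galois group sending x to ν₂x² + ν₁x + ν₀ with νᵢ ∈ k, ν₂ ≠ 0. Then σ(x) = (αx+β)/(γx+δ) where α = a₂ν₁ν₂ − a₁ν₂² + ν₀ν₂ − ν₁², β = a₂ν₀ν₂ − a₀ν₂² − ν₀ν₁, γ = ν₂, δ = a₂ν₂ − ν₁, and αδ − βγ ≠ 0. -/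
/-!
Clearing the denominator, `σ(x) = (αx+β)/(γx+δ)` is the identity
`(ν₂x + a₂ν₂ − ν₁)(ν₂x² + ν₁x + ν₀) = αx + β`, which holds after reducing `ν₂²x³` by the cubic.
The denominator is nonzero because `x ∉ k`. If `αδ − βγ` vanished, the Möbius map would be
constant, so `σ(x)`, and hence `x = σ⁻¹(σ(x))`, would lie in `k`.
-/

open Polynomial

theorem AdjoinRoot.root_notMem_range_algebraMap {k : Type*} [Field k] {f : k[X]}
    (hf : 1 < f.natDegree) : AdjoinRoot.root f ∉ Set.range (algebraMap k (AdjoinRoot f)) := by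
  rintro ⟨c, hc⟩
  have hdvd : f ∣ X - C c := by
    rw [← AdjoinRoot.mk_eq_mk, ← AdjoinRoot.root, ← hc, AdjoinRoot.mk_C, AdjoinRoot.algebraMap_eq]
  have := natDegree_le_of_dvd hdvd (X_sub_C_ne_zero c)
  rw [natDegree_X_sub_C] at this
  omega

section MobiusForm

variable {k A : Type*} [Field k]

theorem algebraMap_mul_add_ne_zero [Ring A] [Algebra k A] {x : A}
    (hx : x ∉ Set.range (algebraMap k A)) {γ : k} (hγ : γ ≠ 0) (δ : k) :
    algebraMap k A γ * x + algebraMap k A δ ≠ 0 := by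
  intro h
  refine hx ⟨-δ / γ, ?_⟩
  have hx_eq : x = algebraMap k A γ⁻¹ * (algebraMap k A γ * x) := by
    rw [← mul_assoc, ← map_mul, inv_mul_cancel₀ hγ, map_one, one_mul]
  rw [hx_eq, eq_neg_of_add_eq_zero_left h, mul_neg, ← map_mul, ← map_neg, neg_div,
    div_eq_inv_mul]

theorem cubic_root_mul_quadratic_eq [CommRing A] [Algebra k A] {a₀ a₁ a₂ : k} {x : A}
    (hx : x ^ 3 + algebraMap k A a₂ * x ^ 2 + algebraMap k A a₁ * x + algebraMap k A a₀ = 0)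
    (ν₀ ν₁ ν₂ : k) :
    (algebraMap k A ν₂ * x + algebraMap k A (a₂ * ν₂ - ν₁)) *
        (algebraMap k A ν₂ * x ^ 2 + algebraMap k A ν₁ * x + algebraMap k A ν₀) =
      algebraMap k A (a₂ * ν₁ * ν₂ - a₁ * ν₂ ^ 2 + ν₀ * ν₂ - ν₁ ^ 2) * x +
        algebraMap k A (a₂ * ν₀ * ν₂ - a₀ * ν₂ ^ 2 - ν₀ * ν₁) := by
  simp only [map_sub, map_add, map_mul, map_pow]
  linear_combination algebraMap k A ν₂ ^ 2 * hx

theorem det_ne_zero_of_mul_eq_linear [CommRing A] [IsDomain A] [Algebra k A] {x y : A}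
    (hy : y ∉ Set.range (algebraMap k A)) {α β γ δ : k} (hγ : γ ≠ 0)
    (hden : algebraMap k A γ * x + algebraMap k A δ ≠ 0)
    (h : (algebraMap k A γ * x + algebraMap k A δ) * y =
      algebraMap k A α * x + algebraMap k A β) :
    α * δ - β * γ ≠ 0 := by
  intro hdet
  have hβ : β = α / γ * δ := by
    field_simp
    linear_combination -hdet
  have hγα : algebraMap k A γ * algebraMap k A (α / γ) = algebraMap k A α := by
    rw [← map_mul, mul_div_cancel₀ _ hγ]
  refine hy ⟨α / γ, mul_left_cancel₀ hden ?_⟩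
  rw [h, hβ, map_mul]
  linear_combination x * hγα

end MobiusForm

theorem stmt_5_general {k : Type*} [Field k] (a₀ a₁ a₂ ν₀ ν₁ ν₂ : k) (f : k[X])
    (hf : f = X ^ 3 + C a₂ * X ^ 2 + C a₁ * X + C a₀)
    (hirr : Fact (Irreducible f))
    (σ : AdjoinRoot f ≃ₐ[k] AdjoinRoot f)
    (hν₂ : ν₂ ≠ 0)
    (hσ : σ (AdjoinRoot.root f) =
      algebraMap k (AdjoinRoot f) ν₂ * AdjoinRoot.root f ^ 2 +
        algebraMap k (AdjoinRoot f) ν₁ * AdjoinRoot.root f +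
        algebraMap k (AdjoinRoot f) ν₀) :
    (a₂ * ν₁ * ν₂ - a₁ * ν₂ ^ 2 + ν₀ * ν₂ - ν₁ ^ 2) * (a₂ * ν₂ - ν₁) -
        (a₂ * ν₀ * ν₂ - a₀ * ν₂ ^ 2 - ν₀ * ν₁) * ν₂ ≠ 0 ∧
      σ (AdjoinRoot.root f) =
        (algebraMap k (AdjoinRoot f) (a₂ * ν₁ * ν₂ - a₁ * ν₂ ^ 2 + ν₀ * ν₂ - ν₁ ^ 2) *
            AdjoinRoot.root f +
          algebraMap k (AdjoinRoot f) (a₂ * ν₀ * ν₂ - a₀ * ν₂ ^ 2 - ν₀ * ν₁)) /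
        (algebraMap k (AdjoinRoot f) ν₂ * AdjoinRoot.root f +
          algebraMap k (AdjoinRoot f) (a₂ * ν₂ - ν₁)) := by
  have hroot : AdjoinRoot.root f ^ 3 + algebraMap k _ a₂ * AdjoinRoot.root f ^ 2 +
      algebraMap k _ a₁ * AdjoinRoot.root f + algebraMap k _ a₀ = 0 := by
    have h : aeval (AdjoinRoot.root f) (X ^ 3 + C a₂ * X ^ 2 + C a₁ * X + C a₀) = 0 := by
      rw [← hf, AdjoinRoot.aeval_eq, AdjoinRoot.mk_self]
    simpa using h
  have hdeg : f.natDegree = 3 := by rw [hf]; compute_degree!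
  have hx : AdjoinRoot.root f ∉ Set.range (algebraMap k (AdjoinRoot f)) :=
    AdjoinRoot.root_notMem_range_algebraMap (by omega)
  have hσx : σ (AdjoinRoot.root f) ∉ Set.range (algebraMap k (AdjoinRoot f)) := by
    rintro ⟨c, hc⟩
    exact hx ⟨c, by rw [← σ.symm_apply_apply (AdjoinRoot.root f), ← hc, AlgEquiv.commutes]⟩
  have hden := algebraMap_mul_add_ne_zero hx hν₂ (a₂ * ν₂ - ν₁)
  have hkey := hσ ▸ cubic_root_mul_quadratic_eq hroot ν₀ ν₁ ν₂
  exact ⟨det_ne_zero_of_mul_eq_linear hσx hν₂ hden hkey,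
    eq_div_of_mul_eq hden (by rw [mul_comm]; exact hkey)⟩

/-- Let `L = k[x]/(f)` be a Galois cubic extension of `k`, where
`f = x³ + a₂x² + a₁x + a₀` is separable and irreducible, and let `σ` be a generator of the
Galois group (an automorphism of order `3`) sending the root `x` to `ν₂x² + ν₁x + ν₀` with
`ν₂ ≠ 0`.  Then `σ(x) = (αx+β)/(γx+δ)` where `α = a₂ν₁ν₂ − a₁ν₂² + ν₀ν₂ − ν₁²`,
`β = a₂ν₀ν₂ − a₀ν₂² − ν₀ν₁`, `γ = ν₂`, `δ = a₂ν₂ − ν₁`, and `αδ − βγ ≠ 0`. -/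
theorem stmt_5 {k : Type*} [Field k] (a₀ a₁ a₂ ν₀ ν₁ ν₂ : k) (f : k[X])
    (hf : f = X ^ 3 + C a₂ * X ^ 2 + C a₁ * X + C a₀)
    (hsep : f.Separable) (hirr : Fact (Irreducible f))
    (hGal : IsGalois k (AdjoinRoot f))
    (σ : AdjoinRoot f ≃ₐ[k] AdjoinRoot f) (hord : orderOf σ = 3)
    (hν₂ : ν₂ ≠ 0)
    (hσ : σ (AdjoinRoot.root f) =
      algebraMap k (AdjoinRoot f) ν₂ * AdjoinRoot.root f ^ 2 +
        algebraMap k (AdjoinRoot f) ν₁ * AdjoinRoot.root f +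
        algebraMap k (AdjoinRoot f) ν₀) :
    (a₂ * ν₁ * ν₂ - a₁ * ν₂ ^ 2 + ν₀ * ν₂ - ν₁ ^ 2) * (a₂ * ν₂ - ν₁) -
        (a₂ * ν₀ * ν₂ - a₀ * ν₂ ^ 2 - ν₀ * ν₁) * ν₂ ≠ 0 ∧
      σ (AdjoinRoot.root f) =
        (algebraMap k (AdjoinRoot f) (a₂ * ν₁ * ν₂ - a₁ * ν₂ ^ 2 + ν₀ * ν₂ - ν₁ ^ 2) *
            AdjoinRoot.root f +
          algebraMap k (AdjoinRoot f) (a₂ * ν₀ * ν₂ - a₀ * ν₂ ^ 2 - ν₀ * ν₁)) /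
        (algebraMap k (AdjoinRoot f) ν₂ * AdjoinRoot.root f +
          algebraMap k (AdjoinRoot f) (a₂ * ν₂ - ν₁)) :=
  stmt_5_general a₀ a₁ a₂ ν₀ ν₁ ν₂ f hf hirr σ hν₂ hσ
end

section
/- Let k be a field containing a primitive fourth root of unity i. There exist no α, β, γ, δ ∈ k(t⁴) with αδ − βγ ≠ 0 such that it − it³ = (α(t+t³) + β)/(γ(t+t³) + δ) in k(t). -/
/-!
Let `σ` be the `k`-automorphism `t ↦ i t` of `k(t)`. It fixes `k(t⁴)`, and for `x = t + t³`,
`y = i t − i t³` it acts by `σ x = y`, `σ y = −x`. Applying `σ` three times to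
`y (γ x + δ) = α x + β` gives four relations whose sums and differences isolate the
`σ`-eigencomponents: `β = 0`, `γ x y = 0`, and `δ y = α x`, `−δ x = α y`, whence
`δ (x² + y²) = 0`. As `y ≠ 0`, `x² + y² = 4 t⁴ ≠ 0` and `2 ≠ 0` (because `i² = −1 ≠ 1`),
all four coefficients vanish.
-/

theorem coeffs_eq_zero_of_mul_add_eq {K F : Type*} [CommRing K] [NoZeroDivisors K] [FunLike F K K]
    [RingHomClass F K K] (σ : F) {x y α β γ δ : K} (hσx : σ x = y) (hσy : σ y = -x)
    (hα : σ α = α) (hβ : σ β = β) (hγ : σ γ = γ) (hδ : σ δ = δ)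
    (h2 : (2 : K) ≠ 0) (hy : y ≠ 0) (hxy : x ^ 2 + y ^ 2 ≠ 0)
    (h : y * (γ * x + δ) = α * x + β) : α = 0 ∧ β = 0 ∧ γ = 0 ∧ δ = 0 := by
  have hx : x ≠ 0 := by rintro rfl; exact hy (by rw [← hσx, map_zero])
  have h₁ := congrArg σ h
  simp only [map_mul, map_add, hσx, hσy, hα, hβ, hγ, hδ] at h₁
  have h₂ := congrArg σ h₁
  simp only [map_mul, map_add, map_neg, hσx, hσy, hα, hβ, hγ, hδ] at h₂
  have h₃ := congrArg σ h₂
  simp only [map_mul, map_add, map_neg, hσx, hσy, hα, hβ, hγ, hδ, neg_neg] at h₃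
  have hβ0 : β = 0 := by
    have : 2 * (2 * β) = 0 := by linear_combination -h - h₁ - h₂ - h₃
    simpa [h2] using this
  have hγ0 : γ = 0 := by
    have : 2 * (γ * (x * y)) = 0 := by linear_combination h + h₂ + 2 * hβ0
    simpa [h2, hx, hy] using this
  have hα0 : α = 0 := by
    have : 2 * (α * (x ^ 2 + y ^ 2)) = 0 := by
      linear_combination (-x) * h - y * h₁ + x * h₂ + y * h₃
    simpa [h2, hxy] using this
  have hδ0 : δ = 0 := by
    have : δ * y = 0 := by linear_combination h - (x * y) * hγ0 + x * hα0 + hβ0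
    simpa [hy] using this
  exact ⟨hα0, hβ0, hγ0, hδ0⟩

namespace RatFunc

variable {k : Type*} [Field k]

noncomputable def scaleX (c : k) [Invertible c] : RatFunc k ≃ₐ[k] RatFunc k :=
  IsFractionRing.algEquivOfAlgEquiv (Polynomial.algEquivCMulXAddC c 0)

theorem scaleX_X (c : k) [Invertible c] : scaleX c X = C c * X := by
  rw [← algebraMap_X, scaleX, IsFractionRing.algEquivOfAlgEquiv_algebraMap]
  simp

theorem scaleX_C (c : k) [Invertible c] (a : k) : scaleX c (C a) = C a := by
  rw [← algebraMap_eq_C]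
  exact (scaleX c).commutes a

theorem scaleX_eq_self_of_mem_adjoin {c : k} [Invertible c] {n : ℕ} (hc : c ^ n = 1)
    {f : RatFunc k} (hf : f ∈ IntermediateField.adjoin k {X ^ n}) : scaleX c f = f := by
  induction hf using IntermediateField.adjoin_induction with
  | mem f hf =>
    rw [Set.mem_singleton_iff.mp hf, map_pow, scaleX_X, mul_pow, ← map_pow, hc, map_one, one_mul]
  | algebraMap a => exact (scaleX c).commutes a
  | add f g _ _ hf hg => rw [map_add, hf, hg]
  | mul f g _ _ hf hg => rw [map_mul, hf, hg]
  | inv f _ hf => rw [map_inv₀, hf]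

theorem X_add_X_pow_three_ne_zero : (X + X ^ 3 : RatFunc k) ≠ 0 := by
  rw [← algebraMap_X, ← map_pow, ← map_add]
  refine algebraMap_ne_zero fun h ↦ ?_
  simpa [Polynomial.coeff_X_pow] using congrArg (Polynomial.coeff · 1) h

theorem scaleX_X_add_X_pow_three {c : k} [Invertible c] (hc : c ^ 2 = -1) :
    scaleX c (X + X ^ 3) = C c * X - C c * X ^ 3 := by
  have : C c ^ 2 = (-1 : RatFunc k) := by rw [← map_pow, hc, map_neg, map_one]
  rw [map_add, map_pow, scaleX_X]
  linear_combination X ^ 3 * C c * this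

theorem scaleX_C_mul_X_sub_C_mul_X_pow_three {c : k} [Invertible c] (hc : c ^ 2 = -1) :
    scaleX c (C c * X - C c * X ^ 3) = -(X + X ^ 3) := by
  have : C c ^ 2 = (-1 : RatFunc k) := by rw [← map_pow, hc, map_neg, map_one]
  rw [map_sub, map_mul, map_mul, map_pow, scaleX_X, scaleX_C]
  linear_combination (X - X ^ 3 * C c ^ 2 + X ^ 3) * this

end RatFunc

open RatFunc in
/-- Let `k` be a field containing a primitive fourth root of unity `i`.
There exist no `α, β, γ, δ ∈ k(t⁴)` with `αδ − βγ ≠ 0` such that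
`it − it³ = (α(t+t³) + β)/(γ(t+t³) + δ)` in `k(t)`: the Galois automorphism `t ↦ it` of
`k(t)/k(t⁴)` is not a fractional-linear transformation over `k(t⁴)` of `x = t + t³`. -/
theorem stmt_11 {k : Type*} [Field k] (i : k) (hi : IsPrimitiveRoot i 4)
    (F : IntermediateField k (RatFunc k))
    (hF : F = IntermediateField.adjoin k {(RatFunc.X : RatFunc k) ^ 4}) :
    ¬ ∃ α β γ δ : RatFunc k, α ∈ F ∧ β ∈ F ∧ γ ∈ F ∧ δ ∈ F ∧
        α * δ - β * γ ≠ 0 ∧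
        RatFunc.C i * RatFunc.X - RatFunc.C i * RatFunc.X ^ 3 =
          (α * (RatFunc.X + RatFunc.X ^ 3) + β) /
            (γ * (RatFunc.X + RatFunc.X ^ 3) + δ) := by
  subst hF
  rintro ⟨α, β, γ, δ, hα, hβ, hγ, hδ, hdet, heq⟩
  have hi2 : i ^ 2 = -1 := (hi.pow (by norm_num) (by norm_num : 4 = 2 * 2)).eq_neg_one_of_two_right
  have h2 : (2 : RatFunc k) ≠ 0 := by
    rw [← map_ofNat C 2, map_ne_zero]
    intro h
    exact hi.pow_ne_one_of_pos_of_lt two_ne_zero (by norm_num) (by linear_combination hi2 - h)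
  let _ : Invertible i := invertibleOfNonzero (hi.ne_zero (by norm_num))
  have hy : C i * X - C i * X ^ 3 ≠ 0 := by
    rw [← scaleX_X_add_X_pow_three hi2, map_ne_zero]
    exact X_add_X_pow_three_ne_zero
  have hxy : (X + X ^ 3) ^ 2 + (C i * X - C i * X ^ 3) ^ 2 ≠ 0 := by
    have hCi : C i ^ 2 = (-1 : RatFunc k) := by rw [← map_pow, hi2, map_neg, map_one]
    have : (X + X ^ 3) ^ 2 + (C i * X - C i * X ^ 3) ^ 2 = 2 * 2 * X ^ 4 := by
      linear_combination (X ^ 2 - 2 * X ^ 4 + X ^ 6) * hCi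
    rw [this]
    exact mul_ne_zero (mul_ne_zero h2 h2) (pow_ne_zero _ X_ne_zero)
  have hden : γ * (X + X ^ 3) + δ ≠ 0 := fun h ↦ hy (by rw [heq, h, div_zero])
  have hfix {f : RatFunc k} (hf : f ∈ IntermediateField.adjoin k {X ^ 4}) : scaleX i f = f :=
    scaleX_eq_self_of_mem_adjoin hi.pow_eq_one hf
  obtain ⟨rfl, rfl, rfl, rfl⟩ := coeffs_eq_zero_of_mul_add_eq (scaleX i)
    (scaleX_X_add_X_pow_three hi2) (scaleX_C_mul_X_sub_C_mul_X_pow_three hi2)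
    (hfix hα) (hfix hβ) (hfix hγ) (hfix hδ) h2 hy hxy ((eq_div_iff hden).mp heq)
  simp at hdet
end

section
/- Let k be a field with char(k) ≠ 5 containing a primitive fifth root of unity ζ ≠ 1. There is no matrix A ∈ GL₃(k) (up to scalar) such that A·[ζuv⁶ − ζ²u⁷ : u⁵(ζ²u²+v²) : v⁵(ζ²u²+v²)]ᵀ = λ·[uv⁶ − u⁷ : u⁵(u²+v²) : v⁵(u²+v²)]ᵀ as polynomial identities in u, v for some nonzero scalar λ. -/
open MvPolynomial

/- Only the third coordinate is needed. Setting `v = 1` there, `ψ₂` becomes `ζ²u² + 1` and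
`φ₂` becomes `u² + 1`, while `ψ₀ = ζu - ζ²u⁷` and `ψ₁ = u⁵(ζ²u² + 1)` have no constant or `u²`
term. Comparing these two coefficients gives `A₂₂ = λ` and `A₂₂ ζ² = λ`, hence `ζ² = 1`,
which a primitive fifth root of unity does not satisfy. -/
theorem stmt_17_general {k : Type*} [Field k]
    (ζ : k) (hζ : IsPrimitiveRoot ζ 5)
    (φ ψ : Fin 3 → MvPolynomial (Fin 2) k)
    (hφ : φ = ![X 0 * X 1 ^ 6 - X 0 ^ 7,
                X 0 ^ 5 * (X 0 ^ 2 + X 1 ^ 2),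
                X 1 ^ 5 * (X 0 ^ 2 + X 1 ^ 2)])
    (hψ : ψ = ![C ζ * (X 0 * X 1 ^ 6) - C (ζ ^ 2) * X 0 ^ 7,
                X 0 ^ 5 * (C (ζ ^ 2) * X 0 ^ 2 + X 1 ^ 2),
                X 1 ^ 5 * (C (ζ ^ 2) * X 0 ^ 2 + X 1 ^ 2)]) :
    ¬ ∃ (A : Matrix (Fin 3) (Fin 3) k) (lam : k), A.det ≠ 0 ∧ lam ≠ 0 ∧
        ∀ i : Fin 3, (∑ j : Fin 3, C (A i j) * ψ j) = C lam * φ i := by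
  rintro ⟨A, lam, -, hlam, h⟩
  have hrow := congrArg (aeval ![(Polynomial.X : Polynomial k), 1]) (h 2)
  simp only [hφ, hψ, Fin.sum_univ_three, Fin.isValue, Matrix.cons_val_zero, Matrix.cons_val_one,
    Matrix.cons_val, Matrix.cons_val_fin_one, map_add, map_sub, map_mul, map_pow, algHom_C,
    Polynomial.algebraMap_eq, aeval_X, one_pow, mul_one, one_mul] at hrow
  rw [← Polynomial.C_pow] at hrow
  have hconst := congrArg (Polynomial.coeff · 0) hrow
  have hsq := congrArg (Polynomial.coeff · 2) hrow
  simp only [mul_add, mul_one, mul_zero, add_zero, zero_add, sub_self, Polynomial.coeff_add,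
    Polynomial.coeff_sub, Polynomial.coeff_C_mul, Polynomial.mul_coeff_zero, Polynomial.coeff_C_zero,
    Polynomial.coeff_C_succ, Polynomial.coeff_X_zero, Polynomial.coeff_mul_X, Polynomial.coeff_X_pow,
    Polynomial.coeff_X_pow_mul', OfNat.zero_ne_ofNat, Nat.reduceEqDiff, Nat.reduceLeDiff,
    ↓reduceIte, Fin.isValue] at hconst hsq
  have hζsq : ζ ^ 2 = 1 := by
    rw [← hconst, mul_eq_left₀ (hconst ▸ hlam)] at hsq
    exact hsq
  exact hζ.pow_ne_one_of_pos_of_lt two_ne_zero (by norm_num) hζsq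

/-- Let `k` be a field with `char k ≠ 5` containing a primitive fifth root
of unity `ζ ≠ 1`.  There is no invertible `3×3` matrix `A` over `k` and nonzero scalar `λ`
with `A · (φ ∘ σ) = λ·φ` as polynomial identities in `u, v`, where
`φ = [uv⁶ − u⁷ : u⁵(u²+v²) : v⁵(u²+v²)]` and `φ ∘ σ = [ζuv⁶ − ζ²u⁷ : u⁵(ζ²u²+v²) : v⁵(ζ²u²+v²)]`
(`σ : [u:v] ↦ [ζu : v]`): no linear automorphism of `ℙ²` extends the Galois automorphism. -/
theorem stmt_17 {k : Type*} [Field k] (hchar : (5 : k) ≠ 0)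
    (ζ : k) (hζ : IsPrimitiveRoot ζ 5) (hζ1 : ζ ≠ 1)
    (φ ψ : Fin 3 → MvPolynomial (Fin 2) k)
    (hφ : φ = ![X 0 * X 1 ^ 6 - X 0 ^ 7,
                X 0 ^ 5 * (X 0 ^ 2 + X 1 ^ 2),
                X 1 ^ 5 * (X 0 ^ 2 + X 1 ^ 2)])
    (hψ : ψ = ![C ζ * (X 0 * X 1 ^ 6) - C (ζ ^ 2) * X 0 ^ 7,
                X 0 ^ 5 * (C (ζ ^ 2) * X 0 ^ 2 + X 1 ^ 2),
                X 1 ^ 5 * (C (ζ ^ 2) * X 0 ^ 2 + X 1 ^ 2)]) :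
    ¬ ∃ (A : Matrix (Fin 3) (Fin 3) k) (lam : k), A.det ≠ 0 ∧ lam ≠ 0 ∧
        ∀ i : Fin 3, (∑ j : Fin 3, C (A i j) * ψ j) = C lam * φ i :=
  stmt_17_general ζ hζ φ ψ hφ hψ
end
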